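/- Let x ∈ (−2, −1), set P₁ = (x, −√3·(x+1)), P₂ = (x+3, −√3·(x+2)), and n = (√3/2, 1/2). Then: (i) P₁ lies on the edge of T_L joining (−2, √3) and (−1, 0), and the open vertical ray {(x, t) : t > −√3·(x+1)} is disjoint from T_L ∪ T_R; (ii) the reflection of the velocity (0, −1) in the wall with unit normal n equals (√3/2, −1/2); (iii) P₂ = P₁ + 2√3·(√3/2, −1/2) lies on the edge of T_R joining (1, 0) and (2, −√3), and the open segment from P₁ to P₂ is disjoint from T_L ∪ T_R; (iv) the reflection of (√3/2, −1/2) in the wall with unit normal n equals (0, −1); (v) the open ray {P₂ + t·(0, −1) : t > 0} is disjoint from T_L ∪ T_R. Thus a particle entering vertically downward at abscissa x makes exactly two reflections and exits vertically downward, at abscissa x + 3. -/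
import Mathlib


open Real

/-- The left triangle `T_L = conv{(−2, −√3), (−2, √3), (−1, 0)}`. -/
noncomputable def TL : Set (ℝ × ℝ) :=
  convexHull ℝ {((-2 : ℝ), -Real.sqrt 3), ((-2 : ℝ), Real.sqrt 3), ((-1 : ℝ), (0 : ℝ))}

/-- The right triangle `T_R = conv{(2, −√3), (2, √3), (1, 0)}`. -/
noncomputable def TR : Set (ℝ × ℝ) :=
  convexHull ℝ {((2 : ℝ), -Real.sqrt 3), ((2 : ℝ), Real.sqrt 3), ((1 : ℝ), (0 : ℝ))}

/-- The billiard reflection of a velocity `w ∈ ℝ²` in a wall with unit normal `n`: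
`w − 2⟨w, n⟩n`. -/
def reflect (w n : ℝ × ℝ) : ℝ × ℝ :=
  w - (2 * (w.1 * n.1 + w.2 * n.2)) • n

lemma lin1 : IsLinearMap ℝ (fun p : ℝ × ℝ => Real.sqrt 3 * p.1 + p.2) := by
  constructor <;> intros <;> simp <;> ring

lemma linfst : IsLinearMap ℝ (fun p : ℝ × ℝ => p.1) := by
  constructor <;> intros <;> simp

lemma sqrt3_pos : (0:ℝ) < Real.sqrt 3 := Real.sqrt_pos.mpr (by norm_num)

lemma TL_sub1 : TL ⊆ {p : ℝ × ℝ | Real.sqrt 3 * p.1 + p.2 ≤ -Real.sqrt 3} := by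
  apply convexHull_min _ (convex_halfSpace_le lin1 _)
  intro p hp
  have h3 := sqrt3_pos
  simp only [Set.mem_insert_iff, Set.mem_singleton_iff] at hp
  rcases hp with rfl | rfl | rfl <;> simp <;> nlinarith

lemma TL_sub2 : TL ⊆ {p : ℝ × ℝ | p.1 ≤ -1} := by
  apply convexHull_min _ (convex_halfSpace_le linfst _)
  intro p hp
  simp only [Set.mem_insert_iff, Set.mem_singleton_iff] at hp
  rcases hp with rfl | rfl | rfl <;> norm_num

lemma TR_sub1 : TR ⊆ {p : ℝ × ℝ | Real.sqrt 3 ≤ Real.sqrt 3 * p.1 + p.2} := by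
  apply convexHull_min _ (convex_halfSpace_ge lin1 _)
  intro p hp
  have h3 := sqrt3_pos
  simp only [Set.mem_insert_iff, Set.mem_singleton_iff] at hp
  rcases hp with rfl | rfl | rfl <;> simp <;> nlinarith

lemma TR_sub2 : TR ⊆ {p : ℝ × ℝ | 1 ≤ p.1} := by
  apply convexHull_min _ (convex_halfSpace_ge linfst _)
  intro p hp
  simp only [Set.mem_insert_iff, Set.mem_singleton_iff] at hp
  rcases hp with rfl | rfl | rfl <;> norm_num

/-- A particle of the vertical flow entering at abscissa `x ∈ (−2, −1)` makes exactly two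
reflections, at `P₁ = (x, −√3(x+1))` on `T_L` and `P₂ = (x+3, −√3(x+2))` on `T_R`, and
exits vertically downward at abscissa `x + 3`. -/
theorem two_reflections_zero_resistance (x : ℝ) (hx : x ∈ Set.Ioo (-2 : ℝ) (-1)) :
    let P₁ : ℝ × ℝ := (x, -Real.sqrt 3 * (x + 1))
    let P₂ : ℝ × ℝ := (x + 3, -Real.sqrt 3 * (x + 2))
    let n : ℝ × ℝ := (Real.sqrt 3 / 2, 1 / 2)
    -- (i)
    (P₁ ∈ segment ℝ ((-2 : ℝ), Real.sqrt 3) ((-1 : ℝ), (0 : ℝ)) ∧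
      ∀ t : ℝ, -Real.sqrt 3 * (x + 1) < t → ((x, t) : ℝ × ℝ) ∉ TL ∪ TR) ∧
    -- (ii)
    reflect ((0 : ℝ), (-1 : ℝ)) n = (Real.sqrt 3 / 2, -(1 / 2)) ∧
    -- (iii)
    (P₂ = P₁ + (2 * Real.sqrt 3) • ((Real.sqrt 3 / 2, -(1 / 2)) : ℝ × ℝ) ∧
      P₂ ∈ segment ℝ ((1 : ℝ), (0 : ℝ)) ((2 : ℝ), -Real.sqrt 3) ∧
      openSegment ℝ P₁ P₂ ∩ (TL ∪ TR) = ∅) ∧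
    -- (iv)
    reflect (Real.sqrt 3 / 2, -(1 / 2)) n = ((0 : ℝ), (-1 : ℝ)) ∧
    -- (v)
    ∀ t : ℝ, 0 < t → P₂ + t • (((0 : ℝ), (-1 : ℝ)) : ℝ × ℝ) ∉ TL ∪ TR := by
  obtain ⟨hx1, hx2⟩ := hx
  have h3 := sqrt3_pos
  have hsq : Real.sqrt 3 * Real.sqrt 3 = 3 := Real.mul_self_sqrt (by norm_num)
  intro P₁ P₂ n
  refine ⟨⟨?_, ?_⟩, ?_, ⟨?_, ?_, ?_⟩, ?_, ?_⟩
  · -- P₁ ∈ segment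
    refine ⟨-(x+1), x+2, by linarith, by linarith, by ring, ?_⟩
    simp only [Prod.smul_mk, smul_eq_mul, Prod.mk_add_mk, Prod.ext_iff]
    constructor <;> ring
  · -- ray above P₁ disjoint
    intro t ht hmem
    rcases hmem with h | h
    · have := TL_sub1 h
      simp only [Set.mem_setOf_eq] at this
      nlinarith
    · have := TR_sub2 h
      simp only [Set.mem_setOf_eq] at this
      linarith
  · -- reflect (0,-1)
    simp only [reflect, n, P₁, P₂, Prod.smul_mk, smul_eq_mul, Prod.mk_sub_mk, Prod.ext_iff]
    constructor <;> ring
  · -- P₂ = P₁ + ...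
    simp only [P₁, P₂, Prod.smul_mk, smul_eq_mul, Prod.mk_add_mk, Prod.ext_iff]
    constructor <;> nlinarith
  · -- P₂ ∈ segment
    refine ⟨-(x+1), x+2, by linarith, by linarith, by ring, ?_⟩
    simp only [Prod.smul_mk, smul_eq_mul, Prod.mk_add_mk, Prod.ext_iff]
    constructor <;> ring
  · -- open segment disjoint
    ext q
    simp only [Set.mem_inter_iff, Set.mem_empty_iff_false, iff_false, not_and]
    rintro ⟨a, b, ha, hb, hab, rfl⟩ hmem
    have hq1 : (a • P₁ + b • P₂).1 = a * x + b * (x + 3) := rfl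
    have hq2 : (a • P₁ + b • P₂).2 =
        a * (-Real.sqrt 3 * (x + 1)) + b * (-Real.sqrt 3 * (x + 2)) := rfl
    rcases hmem with h | h
    · have := TL_sub1 h
      simp only [Set.mem_setOf_eq, hq1, hq2] at this
      nlinarith
    · have := TR_sub1 h
      simp only [Set.mem_setOf_eq, hq1, hq2] at this
      nlinarith
  · -- reflect back
    simp only [reflect, n, P₁, P₂, Prod.smul_mk, smul_eq_mul, Prod.mk_sub_mk, Prod.ext_iff]
    constructor <;> nlinarith
  · -- final ray disjoint
    intro t ht hmem
    have h1 : (P₂ + t • (((0 : ℝ), (-1 : ℝ)) : ℝ × ℝ)).1 = x + 3 := by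
      simp [P₂]
    have h2 : (P₂ + t • (((0 : ℝ), (-1 : ℝ)) : ℝ × ℝ)).2 =
        -Real.sqrt 3 * (x + 2) - t := by
      simp [P₂]; ring
    rcases hmem with h | h
    · have := TL_sub2 h
      simp only [Set.mem_setOf_eq, h1] at this
      linarith
    · have := TR_sub1 h
      simp only [Set.mem_setOf_eq, h1, h2] at this
      nlinarith
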